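/- Let a, b ∈ ℕ with [a,b] ∉ S₃. If F ∈ full_{a,b}(S₃), then E₁*(F), E₂*(F), ..., E*_{a-1}(F) are all S₂-full sets. -/

import Mathlib

open Finset

/-- `F < G` for finite sets: every element of `F` is below every element of `G`. -/
def FinsetLT (F G : Finset ℕ) : Prop := ∀ x ∈ F, ∀ y ∈ G, x < y

/-- Membership in the Schreier family `S₁`: a finite set of positive integers
with `|F| ≤ min F` (the empty set belongs trivially). -/
def IsSchreier (F : Finset ℕ) : Prop := ∀ n ∈ F, 0 < n ∧ F.card ≤ n

/-- `F` is a union of at most `d` sets `F₁ < F₂ < ⋯`, each in the family `P`. -/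
def Combine (P : Finset ℕ → Prop) (d : ℕ) (F : Finset ℕ) : Prop :=
  ∃ L : List (Finset ℕ), L.length ≤ d ∧ L.Pairwise FinsetLT ∧
    (∀ G ∈ L, P G) ∧ L.foldr (· ∪ ·) ∅ = F

/-- Membership in `S₂`. -/
def MemS2 (F : Finset ℕ) : Prop :=
  F = ∅ ∨ ∃ h : F.Nonempty, Combine IsSchreier (F.min' h) F

/-- Membership in `S₃`. -/
def MemS3 (F : Finset ℕ) : Prop :=
  F = ∅ ∨ ∃ h : F.Nonempty, Combine MemS2 (F.min' h) F

/-- `F` is a maximal member of the family `P` (among sets of positive integers). -/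
def IsFull (P : Finset ℕ → Prop) (F : Finset ℕ) : Prop :=
  P F ∧ ∀ n : ℕ, 0 < n → n ∉ F → ¬ P (insert n F)

/-- `F ∈ full_{a,b}(P)`. -/
def FullAB (P : Finset ℕ → Prop) (a b : ℕ) (F : Finset ℕ) : Prop :=
  P F ∧ F ⊆ Finset.Icc a b ∧ a ∈ F ∧
    ∀ n ∈ Finset.Icc a b, n ∉ F → ¬ P (insert n F)

/-- The tower function `τ`. -/
def tau : ℕ → ℕ → ℕ
  | 0, a => a
  | i + 1, a => 2 ^ tau i a

/-- `E₁(F)`: `F` itself if `|F| ≤ min F`, otherwise the `min F` smallest elements of `F`. -/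
def E1 (F : Finset ℕ) : Finset ℕ :=
  if h : F.Nonempty then ((F.sort (· ≤ ·)).take (F.min' h)).toFinset else ∅

/-- Union of the first `i` greedy pieces. -/
def Eacc : ℕ → Finset ℕ → Finset ℕ
  | 0, _ => ∅
  | i + 1, F => Eacc i F ∪ E1 (F \ Eacc i F)

/-- The `i`-th greedy piece `E_i(F)` (for `i ≥ 1`). -/
def Epiece (i : ℕ) (F : Finset ℕ) : Finset ℕ := E1 (F \ Eacc (i - 1) F)

open Classical in
/-- `E₁*(F)`: `F` itself if `F ∈ S₂`, otherwise `E₁(F) ∪ ⋯ ∪ E_{min F}(F)`. -/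
noncomputable def E1star (F : Finset ℕ) : Finset ℕ :=
  if MemS2 F then F
  else if h : F.Nonempty then Eacc (F.min' h) F else ∅

/-- Union of the first `i` starred greedy pieces. -/
noncomputable def EaccStar : ℕ → Finset ℕ → Finset ℕ
  | 0, _ => ∅
  | i + 1, F => EaccStar i F ∪ E1star (F \ EaccStar i F)

/-- The `i`-th starred greedy piece `E_i*(F)` (for `i ≥ 1`). -/
noncomputable def EpieceStar (i : ℕ) (F : Finset ℕ) : Finset ℕ :=
  E1star (F \ EaccStar (i - 1) F)

/-!
Since `[a, b] ∉ S₃`, the maximal set `F` misses some `n ∈ (a, b]`. If the starred greedy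
decomposition exhausted `F` within `j ≤ a - 1` steps, `F` would be a union of at most `a - 1`
sets of `S₂`, and `n` could be added to it (splitting the piece that straddles `n`, or as a new
piece) to give a set of `S₃`, against the maximality of `F`. Hence the remainder `R` before the
`i`-th step is not in `S₂`, so `E_i*(F) = E₁(R) ∪ ⋯ ∪ E_μ(R)` with `μ = min R`, and each of
these greedy pieces has exactly as many points as the minimum of what remains.

Greedy is optimal: `X ∈ S₂` iff its first `min X` greedy pieces exhaust `X`. Comparing point
counts step by step, on any `Y ⊇ E_i*(F)` the first `j ≤ μ` greedy steps cover no more points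
than on `R`; so if `Y ∈ S₂`, then `|Y| ≤ |E_i*(F)|`, i.e. `Y = E_i*(F)`.
-/

def IsInitialSegment (S X : Finset ℕ) : Prop := S ⊆ X ∧ ∀ u ∈ S, ∀ v ∈ X \ S, u < v

namespace IsInitialSegment

variable {S T X Y : Finset ℕ}

lemma refl (X : Finset ℕ) : IsInitialSegment X X :=
  ⟨subset_rfl, fun _ _ v hv => absurd hv (by simp)⟩

lemma empty (X : Finset ℕ) : IsInitialSegment ∅ X :=
  ⟨empty_subset _, fun u hu => absurd hu (by simp)⟩

lemma subset_of_card_le (hS : IsInitialSegment S X) (hT : IsInitialSegment T X)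
    (h : S.card ≤ T.card) : S ⊆ T := by
  by_contra hST
  obtain ⟨u, huS, huT⟩ := not_subset.mp hST
  have hTS : T ⊆ S.erase u := fun t ht => by
    have htu : t < u := hT.2 t ht u (mem_sdiff.mpr ⟨hS.1 huS, huT⟩)
    have htS : t ∈ S := by
      by_contra htS
      exact absurd (hS.2 u huS t (mem_sdiff.mpr ⟨hT.1 ht, htS⟩)) (not_lt.mpr htu.le)
    exact mem_erase.mpr ⟨htu.ne, htS⟩
  have := card_le_card hTS
  rw [card_erase_of_mem huS] at this
  have := card_pos.mpr ⟨u, huS⟩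
  omega

lemma min'_mem (h : IsInitialSegment S X) (hS : S.Nonempty) :
    X.min' (hS.mono h.1) ∈ S := by
  by_contra hmin
  have := h.2 (S.min' hS) (S.min'_mem hS) _ (mem_sdiff.mpr ⟨X.min'_mem _, hmin⟩)
  exact absurd (X.min'_le _ (h.1 (S.min'_mem hS))) (not_le.mpr this)

/-- In terms of order statistics: the `(#S + 1)`-st point of `Y` is at most the `(#T + 1)`-st
point `x` of `X`. -/
lemma exists_mem_sdiff_le (hS : IsInitialSegment S Y) (hT : IsInitialSegment T X)
    (hcard : S.card ≤ T.card) {x : ℕ} (hx : x ∈ X \ T) (hxT : insert x T ⊆ Y) :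
    ∃ y ∈ Y \ S, y ≤ x := by
  by_cases hxS : x ∈ S
  · have hsub : insert x T ⊆ S := insert_subset hxS fun t ht => by
      by_contra htS
      have hxt := hS.2 x hxS t (mem_sdiff.mpr ⟨hxT (mem_insert_of_mem ht), htS⟩)
      exact absurd (hT.2 t ht x hx) (not_lt.mpr hxt.le)
    have := card_le_card hsub
    rw [card_insert_of_notMem (mem_sdiff.mp hx).2] at this
    omega
  · exact ⟨x, mem_sdiff.mpr ⟨hxT (mem_insert_self x T), hxS⟩, le_rfl⟩

end IsInitialSegment

lemma E1_empty : E1 ∅ = ∅ := by simp [E1]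

lemma card_E1 (G : Finset ℕ) (hG : G.Nonempty) : (E1 G).card = min (G.min' hG) G.card := by
  have hnd : ((G.sort (· ≤ ·)).take (G.min' hG)).Nodup :=
    (List.take_sublist _ _).nodup (G.sort_nodup _)
  rw [E1, dif_pos hG, List.toFinset_card_of_nodup hnd, List.length_take, G.length_sort]

lemma isInitialSegment_E1 (G : Finset ℕ) : IsInitialSegment (E1 G) G := by
  rcases G.eq_empty_or_nonempty with rfl | hG
  · rw [E1_empty]; exact .empty ∅
  have hmem : ∀ {x}, x ∈ E1 G ↔ x ∈ (G.sort (· ≤ ·)).take (G.min' hG) := by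
    simp [E1, dif_pos hG]
  refine ⟨fun x hx => (G.mem_sort _).mp (List.mem_of_mem_take (hmem.mp hx)), ?_⟩
  intro u hu v hv
  obtain ⟨hvG, hvE⟩ := mem_sdiff.mp hv
  have hsorted := G.pairwise_sort (· ≤ ·)
  rw [← List.take_append_drop (G.min' hG) (G.sort (· ≤ ·)), List.pairwise_append] at hsorted
  have hvd : v ∈ (G.sort (· ≤ ·)).drop (G.min' hG) := by
    have := (G.mem_sort (· ≤ ·)).mpr hvG
    rw [← List.take_append_drop (G.min' hG) (G.sort (· ≤ ·)), List.mem_append] at this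
    exact this.resolve_left (mt hmem.mpr hvE)
  exact lt_of_le_of_ne (hsorted.2.2 u (hmem.mp hu) v hvd) (fun h => hvE (h ▸ hu))

lemma E1_subset (G : Finset ℕ) : E1 G ⊆ G := (isInitialSegment_E1 G).1

lemma card_E1_le_min' (G : Finset ℕ) (hG : G.Nonempty) : (E1 G).card ≤ G.min' hG :=
  (card_E1 G hG).trans_le (min_le_left _ _)

lemma card_E1_le_of_mem {G : Finset ℕ} {y : ℕ} (hy : y ∈ G) : (E1 G).card ≤ y :=
  (card_E1_le_min' G ⟨y, hy⟩).trans (G.min'_le y hy)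

lemma card_E1_eq_min'_of_ne {G : Finset ℕ} (hG : G.Nonempty) (hne : E1 G ≠ G) :
    (E1 G).card = G.min' hG := by
  rw [card_E1 G hG]
  by_contra h
  exact hne (eq_of_subset_of_card_le (E1_subset G) (by rw [card_E1 G hG]; omega))

lemma min'_mem_E1 {G : Finset ℕ} (hG : G.Nonempty) (h0 : 0 < G.min' hG) :
    G.min' hG ∈ E1 G := by
  have hE : (E1 G).Nonempty := card_pos.mp <| by
    rw [card_E1 G hG]; exact lt_min h0 (card_pos.mpr hG)
  exact (isInitialSegment_E1 G).min'_mem hE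

lemma isSchreier_E1 (G : Finset ℕ) : IsSchreier (E1 G) := fun n hn =>
  have hcard : (E1 G).card ≤ n := card_E1_le_of_mem (E1_subset G hn)
  ⟨lt_of_lt_of_le (card_pos.mpr ⟨n, hn⟩) hcard, hcard⟩

lemma subset_E1_of_isSchreier {K R : Finset ℕ} (hK : IsSchreier K)
    (hKR : IsInitialSegment K R) : K ⊆ E1 R := by
  rcases K.eq_empty_or_nonempty with rfl | hKne
  · exact empty_subset _
  have hR : R.Nonempty := hKne.mono hKR.1
  refine hKR.subset_of_card_le (isInitialSegment_E1 R) ?_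
  rw [card_E1 R hR]
  exact le_min (hK _ (hKR.min'_mem hKne)).2 (card_le_card hKR.1)

lemma mem_foldr_union {L : List (Finset ℕ)} {x : ℕ} :
    x ∈ L.foldr (· ∪ ·) ∅ ↔ ∃ Q ∈ L, x ∈ Q := by
  induction L with
  | nil => simp
  | cons Q M ih => simp [ih]

lemma subset_foldr_union {L : List (Finset ℕ)} {Q : Finset ℕ} (hQ : Q ∈ L) :
    Q ⊆ L.foldr (· ∪ ·) ∅ := fun _ hx => mem_foldr_union.mpr ⟨Q, hQ, hx⟩

lemma foldr_union_append (L M : List (Finset ℕ)) :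
    (L ++ M).foldr (· ∪ ·) ∅ = L.foldr (· ∪ ·) ∅ ∪ M.foldr (· ∪ ·) ∅ := by
  induction L with
  | nil => simp
  | cons Q L ih => simp [ih, union_assoc]

lemma FinsetLT.mono {G G' Q Q' : Finset ℕ} (h : FinsetLT G Q) (hG : G' ⊆ G) (hQ : Q' ⊆ Q) :
    FinsetLT G' Q' := fun x hx y hy => h x (hG hx) y (hQ hy)

namespace Combine

variable {P : Finset ℕ → Prop} {d d₁ d₂ : ℕ} {F F₁ F₂ : Finset ℕ}

lemma mono (h : Combine P d F) (hd : d ≤ d₂) : Combine P d₂ F :=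
  let ⟨L, hlen, hpw, hP, hF⟩ := h
  ⟨L, hlen.trans hd, hpw, hP, hF⟩

lemma empty : Combine P 0 ∅ := ⟨[], le_rfl, List.Pairwise.nil, by simp, rfl⟩

lemma single (h : P F) : Combine P 1 F := ⟨[F], le_rfl, by simp, by simpa, by simp⟩

lemma union (h₁ : Combine P d₁ F₁) (h₂ : Combine P d₂ F₂) (hlt : FinsetLT F₁ F₂) :
    Combine P (d₁ + d₂) (F₁ ∪ F₂) := by
  obtain ⟨L₁, hlen₁, hpw₁, hP₁, rfl⟩ := h₁
  obtain ⟨L₂, hlen₂, hpw₂, hP₂, rfl⟩ := h₂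
  refine ⟨L₁ ++ L₂, by simp; omega, ?_, ?_, foldr_union_append L₁ L₂⟩
  · exact List.pairwise_append.mpr ⟨hpw₁, hpw₂, fun G hG G' hG' =>
      hlt.mono (subset_foldr_union hG) (subset_foldr_union hG')⟩
  · intro G hG
    rcases List.mem_append.mp hG with hG | hG
    exacts [hP₁ G hG, hP₂ G hG]

lemma inter (hP : ∀ K J, P K → J ⊆ K → P J) (h : Combine P d F) (B : Finset ℕ) :
    Combine P d (F ∩ B) := by
  obtain ⟨L, hlen, hpw, hPL, rfl⟩ := h
  refine ⟨L.map (· ∩ B), by simpa using hlen, ?_, ?_, ?_⟩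
  · exact hpw.map _ fun {_ _} (hlt : FinsetLT _ _) => hlt.mono inter_subset_left inter_subset_left
  · simp only [List.mem_map]
    rintro _ ⟨K, hK, rfl⟩
    exact hP K _ (hPL K hK) inter_subset_left
  · clear hlen hpw hPL
    induction L with
    | nil => simp
    | cons Q M ih => simp [ih, union_inter_distrib_right]

end Combine

def greedyUnion (step : Finset ℕ → Finset ℕ) : ℕ → Finset ℕ → Finset ℕ
  | 0, _ => ∅
  | j + 1, X => greedyUnion step j X ∪ step (X \ greedyUnion step j X)

lemma Eacc_eq_greedyUnion : Eacc = greedyUnion E1 := by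
  funext j X
  induction j with
  | zero => rfl
  | succ j ih => simp only [Eacc, greedyUnion, ih]

lemma EaccStar_eq_greedyUnion : EaccStar = greedyUnion E1star := by
  funext j X
  induction j with
  | zero => rfl
  | succ j ih => simp only [EaccStar, greedyUnion, ih]

section greedyUnion

variable {step : Finset ℕ → Finset ℕ}

lemma isInitialSegment_greedyUnion (hstep : ∀ G, IsInitialSegment (step G) G) (j : ℕ)
    (X : Finset ℕ) : IsInitialSegment (greedyUnion step j X) X := by
  induction j with
  | zero => exact .empty X
  | succ j ih =>
    have hpiece := hstep (X \ greedyUnion step j X)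
    refine ⟨union_subset ih.1 (hpiece.1.trans sdiff_subset), fun u hu v hv => ?_⟩
    obtain ⟨hvX, hv⟩ := mem_sdiff.mp hv
    rw [greedyUnion, mem_union, not_or] at hv
    rw [greedyUnion, mem_union] at hu
    rcases hu with hu | hu
    · exact ih.2 u hu v (mem_sdiff.mpr ⟨hvX, hv.1⟩)
    · exact hpiece.2 u hu v (mem_sdiff.mpr ⟨mem_sdiff.mpr ⟨hvX, hv.1⟩, hv.2⟩)

lemma combine_greedyUnion (hstep : ∀ G, IsInitialSegment (step G) G) {P : Finset ℕ → Prop}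
    (hP : ∀ G, P (step G)) (j : ℕ) (X : Finset ℕ) : Combine P j (greedyUnion step j X) := by
  induction j with
  | zero => exact Combine.empty
  | succ j ih =>
    refine ih.union (.single (hP _)) fun u hu v hv => ?_
    exact (isInitialSegment_greedyUnion hstep j X).2 u hu v ((hstep _).1 hv)

end greedyUnion

lemma IsSchreier.subset {K J : Finset ℕ} (hK : IsSchreier K) (h : J ⊆ K) : IsSchreier J :=
  fun n hn => ⟨(hK n (h hn)).1, (card_le_card h).trans (hK n (h hn)).2⟩

lemma memS2_of_combine {d : ℕ} {F : Finset ℕ} (h : Combine IsSchreier d F)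
    (hd : ∀ x ∈ F, d ≤ x) : MemS2 F := by
  rcases F.eq_empty_or_nonempty with rfl | hF
  · exact Or.inl rfl
  · exact Or.inr ⟨hF, h.mono (hd _ (F.min'_mem hF))⟩

lemma MemS2.combine {F : Finset ℕ} (h : MemS2 F) (hF : F.Nonempty) :
    Combine IsSchreier (F.min' hF) F := by
  obtain ⟨_, hC⟩ := h.resolve_left hF.ne_empty
  exact hC

lemma MemS2.subset {F B : Finset ℕ} (h : MemS2 F) (hB : B ⊆ F) : MemS2 B := by
  rcases F.eq_empty_or_nonempty with rfl | hF
  · rw [subset_empty.mp hB]; exact Or.inl rfl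
  have hC := (h.combine hF).inter (fun _ _ => IsSchreier.subset) B
  rw [inter_eq_right.mpr hB] at hC
  exact memS2_of_combine hC fun x hx => F.min'_le x (hB hx)

lemma isSchreier_singleton {n : ℕ} (hn : 0 < n) : IsSchreier {n} := fun m hm => by
  rw [mem_singleton.mp hm, card_singleton]
  exact ⟨hn, hn⟩

lemma memS2_singleton {n : ℕ} (hn : 0 < n) : MemS2 {n} :=
  memS2_of_combine (.single (isSchreier_singleton hn)) fun _ hx => mem_singleton.mp hx ▸ hn

lemma isInitialSegment_Eacc (j : ℕ) (X : Finset ℕ) : IsInitialSegment (Eacc j X) X := by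
  rw [Eacc_eq_greedyUnion]
  exact isInitialSegment_greedyUnion isInitialSegment_E1 j X

lemma Eacc_subset (j : ℕ) (X : Finset ℕ) : Eacc j X ⊆ X := (isInitialSegment_Eacc j X).1

lemma combine_Eacc (j : ℕ) (X : Finset ℕ) : Combine IsSchreier j (Eacc j X) := by
  rw [Eacc_eq_greedyUnion]
  exact combine_greedyUnion isInitialSegment_E1 isSchreier_E1 j X

lemma Eacc_mono (X : Finset ℕ) : Monotone (Eacc · X) :=
  monotone_nat_of_le_succ fun _ => subset_union_left

lemma card_Eacc_succ (j : ℕ) (X : Finset ℕ) :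
    (Eacc (j + 1) X).card = (Eacc j X).card + (E1 (X \ Eacc j X)).card :=
  card_union_of_disjoint (disjoint_sdiff.mono_right (E1_subset _))

lemma memS2_Eacc {j : ℕ} {X : Finset ℕ} (hj : ∀ x ∈ X, j ≤ x) : MemS2 (Eacc j X) :=
  memS2_of_combine (combine_Eacc j X) fun x hx => hj x (Eacc_subset j X hx)

/-- The uncovered part of the first piece is a Schreier initial segment of what remains, so the
next greedy step swallows it. -/
lemma subset_Eacc_of_subset_foldr {X : Finset ℕ} (L : List (Finset ℕ))
    (hpw : L.Pairwise FinsetLT) (hL : ∀ Q ∈ L, IsSchreier Q) (j : ℕ)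
    (hcover : X \ Eacc j X ⊆ L.foldr (· ∪ ·) ∅) : X ⊆ Eacc (j + L.length) X := by
  induction L generalizing j with
  | nil => simpa [sdiff_eq_empty_iff_subset] using hcover
  | cons Q M ih =>
    obtain ⟨hQM, hpwM⟩ := List.pairwise_cons.mp hpw
    set R := X \ Eacc j X
    have hcoverQ : ∀ x ∈ R, x ∉ Q → ∃ G ∈ M, x ∈ G := fun x hx hxQ => by
      simpa [mem_foldr_union, hxQ] using hcover hx
    have hK : R ∩ Q ⊆ E1 R := by
      refine subset_E1_of_isSchreier ((hL Q List.mem_cons_self).subset inter_subset_right)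
        ⟨inter_subset_left, fun u hu v hv => ?_⟩
      obtain ⟨hvR, hvK⟩ := mem_sdiff.mp hv
      obtain ⟨G, hG, hvG⟩ := hcoverQ v hvR fun hvQ => hvK (mem_inter.mpr ⟨hvR, hvQ⟩)
      exact hQM G hG u (mem_inter.mp hu).2 v hvG
    have hcoverM : X \ Eacc (j + 1) X ⊆ M.foldr (· ∪ ·) ∅ := fun x hx => by
      rw [Eacc, sdiff_union_distrib, mem_inter] at hx
      obtain ⟨hxR, hxE⟩ := hx
      exact mem_foldr_union.mpr <| hcoverQ x hxR fun hxQ =>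
        (mem_sdiff.mp hxE).2 (hK (mem_inter.mpr ⟨hxR, hxQ⟩))
    have := ih hpwM (fun G hG => hL G (List.mem_cons_of_mem Q hG)) (j + 1) hcoverM
    rwa [List.length_cons, ← add_assoc, add_right_comm]

lemma Eacc_min'_eq_self {X : Finset ℕ} (h : MemS2 X) (hX : X.Nonempty) :
    Eacc (X.min' hX) X = X := by
  obtain ⟨L, hlen, hpw, hL, hLX⟩ := h.combine hX
  have hcover := subset_Eacc_of_subset_foldr (X := X) L hpw hL 0 (by simp [hLX])
  rw [zero_add] at hcover
  exact (Eacc_subset _ X).antisymm (hcover.trans (Eacc_mono X hlen))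

lemma nonempty_of_not_memS2 {G : Finset ℕ} (h : ¬ MemS2 G) : G.Nonempty :=
  nonempty_iff_ne_empty.mpr fun he => h (Or.inl he)

lemma E1star_of_memS2 {G : Finset ℕ} (h : MemS2 G) : E1star G = G := by
  rw [E1star, if_pos h]

lemma E1star_of_not_memS2 {G : Finset ℕ} (h : ¬ MemS2 G) :
    E1star G = Eacc (G.min' (nonempty_of_not_memS2 h)) G := by
  rw [E1star, if_neg h, dif_pos (nonempty_of_not_memS2 h)]

lemma isInitialSegment_E1star (G : Finset ℕ) : IsInitialSegment (E1star G) G := by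
  by_cases h : MemS2 G
  · rw [E1star_of_memS2 h]; exact .refl G
  · rw [E1star_of_not_memS2 h]; exact isInitialSegment_Eacc _ G

lemma memS2_E1star (G : Finset ℕ) : MemS2 (E1star G) := by
  by_cases h : MemS2 G
  · rwa [E1star_of_memS2 h]
  · rw [E1star_of_not_memS2 h]; exact memS2_Eacc fun x hx => G.min'_le x hx

lemma EaccStar_subset (j : ℕ) (X : Finset ℕ) : EaccStar j X ⊆ X := by
  rw [EaccStar_eq_greedyUnion]
  exact (isInitialSegment_greedyUnion isInitialSegment_E1star j X).1

lemma combine_EaccStar (j : ℕ) (X : Finset ℕ) : Combine MemS2 j (EaccStar j X) := by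
  rw [EaccStar_eq_greedyUnion]
  exact combine_greedyUnion isInitialSegment_E1star memS2_E1star j X

/-- Each of the first `μ` greedy steps on `R` takes as many points as the minimum of what
remains, the most a Schreier step can take, and by `IsInitialSegment.exists_mem_sdiff_le` that
minimum bounds the one remaining in `Y`. -/
lemma card_Eacc_le_of_Eacc_subset {R Y : Finset ℕ} {μ : ℕ} (h0 : 0 ∉ R)
    (hR : ∀ j < μ, E1 (R \ Eacc j R) ≠ R \ Eacc j R) (hY : Eacc μ R ⊆ Y) :
    ∀ j ≤ μ, (Eacc j Y).card ≤ (Eacc j R).card := by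
  intro j hj
  induction j with
  | zero => simp [Eacc]
  | succ j ih =>
    have hjμ : j < μ := hj
    set G := R \ Eacc j R
    have hG : G.Nonempty := nonempty_iff_ne_empty.mpr fun he =>
      hR j hjμ (by rw [show R \ Eacc j R = ∅ from he, E1_empty])
    have hx0 : 0 < G.min' hG :=
      Nat.pos_of_ne_zero fun he => h0 (mem_sdiff.mp (he ▸ G.min'_mem hG)).1
    have hxE : G.min' hG ∈ Eacc (j + 1) R := mem_union_right _ (min'_mem_E1 hG hx0)
    have hxY : insert (G.min' hG) (Eacc j R) ⊆ Y :=
      insert_subset (hY (Eacc_mono R hj hxE)) ((Eacc_mono R hjμ.le).trans hY)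
    obtain ⟨y, hy, hyx⟩ := (isInitialSegment_Eacc j Y).exists_mem_sdiff_le
      (isInitialSegment_Eacc j R) (ih hjμ.le) (G.min'_mem hG) hxY
    have hstepY := card_E1_le_of_mem hy
    have hcard := ih hjμ.le
    rw [card_Eacc_succ, card_Eacc_succ, card_E1_eq_min'_of_ne hG (hR j hjμ)]
    omega

lemma eq_E1star_of_memS2_of_subset {R Y : Finset ℕ} (h0 : 0 ∉ R) (hR : ¬ MemS2 R)
    (hY : MemS2 Y) (hsub : E1star R ⊆ Y) : Y = E1star R := by
  have hRne := nonempty_of_not_memS2 hR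
  set μ := R.min' hRne
  rw [E1star_of_not_memS2 hR] at hsub ⊢
  have hμ : 0 < μ := Nat.pos_of_ne_zero fun he => h0 (he ▸ R.min'_mem hRne)
  have hsteps : ∀ j < μ, E1 (R \ Eacc j R) ≠ R \ Eacc j R := by
    intro j hj hE
    have hexh : Eacc (j + 1) R = R := by
      rw [Eacc, hE, union_sdiff_of_subset (Eacc_subset j R)]
    have hPR : Eacc μ R = R :=
      (Eacc_subset μ R).antisymm (hexh.symm.subset.trans (Eacc_mono R hj))
    exact hR (hPR ▸ memS2_Eacc fun x hx => R.min'_le x hx)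
  have hμY : μ ∈ Y := hsub (Eacc_mono R hμ (by simpa [Eacc] using min'_mem_E1 hRne hμ))
  have hYne : Y.Nonempty := ⟨μ, hμY⟩
  have hm : Y.min' hYne ≤ μ := Y.min'_le μ hμY
  refine (eq_of_subset_of_card_le hsub ?_).symm
  calc Y.card = (Eacc (Y.min' hYne) Y).card := by rw [Eacc_min'_eq_self hY hYne]
    _ ≤ (Eacc (Y.min' hYne) R).card := card_Eacc_le_of_Eacc_subset h0 hsteps hsub _ hm
    _ ≤ (Eacc μ R).card := card_le_card (Eacc_mono R hm)

lemma isFull_E1star {R : Finset ℕ} (h0 : 0 ∉ R) (hR : ¬ MemS2 R) :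
    IsFull MemS2 (E1star R) :=
  ⟨memS2_E1star R, fun n _ hn hY =>
    hn (eq_E1star_of_memS2_of_subset h0 hR hY (subset_insert n _) ▸ mem_insert_self n _)⟩

lemma memS2_insert_filter_lt {Q : Finset ℕ} (hQ : MemS2 Q) {n u : ℕ} (hu : u ∈ Q)
    (hun : u < n) : MemS2 (insert n (Q.filter (n < ·))) := by
  have hQne : Q.Nonempty := ⟨u, hu⟩
  have hB := (hQ.combine hQne).inter (fun _ _ => IsSchreier.subset) (Q.filter (n < ·))
  rw [inter_eq_right.mpr (filter_subset _ _)] at hB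
  have hC := (Combine.single (isSchreier_singleton (by omega : 0 < n))).union hB
    fun x hx y hy => mem_singleton.mp hx ▸ (mem_filter.mp hy).2
  rw [← insert_eq] at hC
  refine memS2_of_combine (hC.mono (d₂ := n) ?_) fun x hx => ?_
  · have := Q.min'_le u hu
    omega
  · rcases mem_insert.mp hx with rfl | hx
    exacts [le_rfl, (mem_filter.mp hx).2.le]

lemma combine_two_insert {Q : Finset ℕ} (hQ : MemS2 Q) {n : ℕ} (hn : 0 < n) (hnQ : n ∉ Q) :
    Combine MemS2 2 (insert n Q) := by
  by_cases hstraddle : ∃ u ∈ Q, u < n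
  · obtain ⟨u, hu, hun⟩ := hstraddle
    have h := (Combine.single (hQ.subset (filter_subset (· < n) Q))).union
      (Combine.single (memS2_insert_filter_lt hQ hu hun)) fun x hx y hy => by
        have hxn := (mem_filter.mp hx).2
        rcases mem_insert.mp hy with rfl | hy
        exacts [hxn, hxn.trans (mem_filter.mp hy).2]
    have hsplit : Q.filter (· < n) ∪ insert n (Q.filter (n < ·)) = insert n Q := by
      ext x
      simp only [mem_union, mem_insert, mem_filter]
      rcases lt_trichotomy x n with hxn | rfl | hxn
      · simp [hxn, hxn.ne, not_lt_of_gt hxn]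
      · simp
      · simp [hxn, hxn.ne', not_lt_of_gt hxn]
    rwa [hsplit] at h
  · push Not at hstraddle
    have h := (Combine.single (memS2_singleton hn)).union (Combine.single hQ) fun x hx y hy =>
      mem_singleton.mp hx ▸ lt_of_le_of_ne (hstraddle y hy) fun h => hnQ (h ▸ hy)
    rwa [← insert_eq] at h

lemma combine_insert_foldr {n : ℕ} (hn : 0 < n) (L : List (Finset ℕ))
    (hpw : L.Pairwise FinsetLT) (hL : ∀ Q ∈ L, MemS2 Q) (hnL : n ∉ L.foldr (· ∪ ·) ∅) :
    Combine MemS2 (L.length + 1) (insert n (L.foldr (· ∪ ·) ∅)) := by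
  induction L with
  | nil => simpa using Combine.single (memS2_singleton hn)
  | cons Q M ih =>
    obtain ⟨hQM, hpwM⟩ := List.pairwise_cons.mp hpw
    have hQ := hL Q List.mem_cons_self
    have hLM : ∀ G ∈ M, MemS2 G := fun G hG => hL G (List.mem_cons_of_mem Q hG)
    rw [List.foldr_cons, mem_union, not_or] at hnL
    obtain ⟨hnQ, hnM⟩ := hnL
    have hltM : ∀ x ∈ Q, ∀ y ∈ M.foldr (· ∪ ·) ∅, x < y := fun x hx y hy => by
      obtain ⟨G, hG, hyG⟩ := mem_foldr_union.mp hy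
      exact hQM G hG x hx y hyG
    rw [List.foldr_cons, List.length_cons]
    by_cases hbelow : ∀ x ∈ Q, x < n
    · have h := (Combine.single hQ).union (ih hpwM hLM hnM) fun x hx y hy => by
        rcases mem_insert.mp hy with rfl | hy
        exacts [hbelow x hx, hltM x hx y hy]
      rw [union_insert] at h
      exact h.mono (by omega)
    · push Not at hbelow
      obtain ⟨v, hvQ, hnv⟩ := hbelow
      have hM : Combine MemS2 M.length (M.foldr (· ∪ ·) ∅) := ⟨M, le_rfl, hpwM, hLM, rfl⟩
      have h := (combine_two_insert hQ hn hnQ).union hM fun x hx y hy => by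
        rcases mem_insert.mp hx with rfl | hx
        exacts [(lt_of_le_of_ne hnv fun h => hnQ (h ▸ hvQ)).trans (hltM v hvQ y hy),
          hltM x hx y hy]
      rw [insert_union] at h
      exact h.mono (by omega)

lemma memS3_insert {F : Finset ℕ} {d n : ℕ} (hF : F.Nonempty) (hC : Combine MemS2 d F)
    (hd : d < F.min' hF) (hn : F.min' hF < n) (hnF : n ∉ F) : MemS3 (insert n F) := by
  have hmin : (insert n F).min' (insert_nonempty n F) = F.min' hF := by
    rw [min'_insert n F hF]; omega
  refine Or.inr ⟨insert_nonempty n F, ?_⟩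
  obtain ⟨L, hlen, hpw, hL, rfl⟩ := hC
  rw [hmin]
  exact (combine_insert_foldr (by omega) L hpw hL hnF).mono (by omega)

theorem stmt19 (a b : ℕ) (hab : ¬ MemS3 (Finset.Icc a b))
    (F : Finset ℕ) (hF : FullAB MemS3 a b F) :
    ∀ i, 1 ≤ i → i ≤ a - 1 → IsFull MemS2 (EpieceStar i F) := by
  rintro _ hi hia
  obtain ⟨i, rfl⟩ : ∃ i, _ = i + 1 := ⟨_, (Nat.sub_add_cancel hi).symm⟩
  obtain ⟨hS3, hsub, haF, hmax⟩ := hF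
  have hFne : F.Nonempty := ⟨a, haF⟩
  have hminF : F.min' hFne = a :=
    le_antisymm (F.min'_le a haF) (mem_Icc.mp (hsub (F.min'_mem hFne))).1
  obtain ⟨n, hnI, hnF⟩ : ∃ n ∈ Icc a b, n ∉ F := by
    by_contra! h
    exact hab (hsub.antisymm h ▸ hS3)
  have han : a < n := lt_of_le_of_ne (mem_Icc.mp hnI).1 fun h => hnF (h ▸ haF)
  have hunfinished : ∀ j ≤ a - 1, EaccStar j F ≠ F := fun j hj he =>
    hmax n hnI hnF (memS3_insert hFne (he ▸ combine_EaccStar j F) (by omega) (by omega) hnF)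
  have hR : ¬ MemS2 (F \ EaccStar i F) := fun h => hunfinished (i + 1) hia <| by
    rw [EaccStar, E1star_of_memS2 h, union_sdiff_of_subset (EaccStar_subset i F)]
  have h0 : 0 ∉ F \ EaccStar i F := fun h => by
    have := (mem_Icc.mp (hsub (mem_sdiff.mp h).1)).1
    omega
  exact isFull_E1star h0 hR
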